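/- One-step surrogate-loss inequality: Let C be closed convex with B(r) ⊆ C ⊆ B(R), 0 < r ≤ R. Fix g ∈ ℝ^d and w ∈ B(R). If γ_C(w) ≥ 1, set x := w/γ_C(w); otherwise x := w. Define the surrogate loss ℓ̃(v) := ⟨g, v⟩ − 𝟙[⟨g,w⟩<0]·⟨g,x⟩·S_C(v). Then x ∈ C and for every z ∈ C: ⟨g, x − z⟩ ≤ ℓ̃(w) − ℓ̃(z). -/

import Mathlib

/-!
Write `x = t • w` with `t = γ⁻¹` if `γ = γ_C(w) ≥ 1` and `t = 1` otherwise. Then `γ_C(x) ≤ 1`,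
so `x ∈ closure C = C`. Subadditivity of the gauge gives `S_C(w) ≥ max 0 (γ - 1)`, whence
`t ≤ 1` and `t (1 + S_C(w)) ≥ 1`; these two facts are exactly what makes
`⟪g, x⟫ ≤ ℓ̃(w)` hold for either sign of `⟪g, w⟫`, while `ℓ̃(z) = ⟪g, z⟫` on `C`.
-/

open RealInnerProductSpace

/-- The Gauge distance to `C`: `S_C(v) = inf_{u ∈ C} γ_C(v − u)`. -/
noncomputable def gaugeDist {d : ℕ} (C : Set (EuclideanSpace ℝ (Fin d)))
    (v : EuclideanSpace ℝ (Fin d)) : ℝ :=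
  sInf ((fun u => gauge C (v - u)) '' C)

noncomputable def gaugeScale {E : Type*} [AddCommGroup E] [Module ℝ E] (C : Set E) (w : E) : ℝ :=
  if 1 ≤ gauge C w then (gauge C w)⁻¹ else 1

section gaugeScale

variable {E : Type*} [AddCommGroup E] [Module ℝ E] {C : Set E} {w : E}

lemma gaugeScale_le_one : gaugeScale C w ≤ 1 := by
  unfold gaugeScale
  split_ifs with h
  · exact inv_le_one_of_one_le₀ h
  · exact le_rfl

lemma one_le_gaugeScale_mul_one_add {S : ℝ} (hS : 0 ≤ S) (hγS : gauge C w - 1 ≤ S) :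
    1 ≤ gaugeScale C w * (1 + S) := by
  unfold gaugeScale
  split_ifs with h
  · rw [inv_mul_eq_div, one_le_div (by linarith)]
    linarith
  · linarith

lemma ite_eq_gaugeScale_smul :
    (if 1 ≤ gauge C w then (gauge C w)⁻¹ • w else w) = gaugeScale C w • w := by
  unfold gaugeScale
  split_ifs <;> simp

lemma gauge_gaugeScale_smul_le_one : gauge C (gaugeScale C w • w) ≤ 1 := by
  unfold gaugeScale
  split_ifs with h
  · rw [gauge_smul_of_nonneg (inv_nonneg.2 (zero_le_one.trans h)), smul_eq_mul,
      inv_mul_cancel₀ (by linarith)]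
  · rw [one_smul]
    linarith

lemma gaugeScale_smul_mem [TopologicalSpace E] [IsTopologicalAddGroup E] [ContinuousSMul ℝ E]
    (hconv : Convex ℝ C) (hclosed : IsClosed C) (habs : Absorbent ℝ C) :
    gaugeScale C w • w ∈ C :=
  hclosed.closure_subset (mem_closure_of_gauge_le_one hconv habs.zero_mem habs
    gauge_gaugeScale_smul_le_one)

end gaugeScale

lemma mul_le_sub_ite_mul {a t S : ℝ} (ht : t ≤ 1) (htS : 1 ≤ t * (1 + S)) :
    t * a ≤ a - (if a < 0 then t * a else 0) * S := by
  split_ifs <;> nlinarith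

section gaugeDist

variable {d : ℕ} {C : Set (EuclideanSpace ℝ (Fin d))}

lemma gaugeDist_nonneg (v : EuclideanSpace ℝ (Fin d)) : 0 ≤ gaugeDist C v :=
  Real.sInf_nonneg (by rintro _ ⟨u, -, rfl⟩; exact gauge_nonneg _)

lemma gaugeDist_eq_zero_of_mem {z : EuclideanSpace ℝ (Fin d)} (hz : z ∈ C) :
    gaugeDist C z = 0 :=
  le_antisymm
    (csInf_le ⟨0, by rintro _ ⟨u, -, rfl⟩; exact gauge_nonneg _⟩ ⟨z, hz, by simp⟩)
    (gaugeDist_nonneg z)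

lemma gauge_sub_one_le_gaugeDist (hconv : Convex ℝ C) (habs : Absorbent ℝ C)
    (v : EuclideanSpace ℝ (Fin d)) : gauge C v - 1 ≤ gaugeDist C v := by
  refine le_csInf ((Set.nonempty_of_mem habs.zero_mem).image _) ?_
  rintro _ ⟨u, hu, rfl⟩
  have htri := gauge_add_le hconv habs (v - u) u
  rw [sub_add_cancel] at htri
  linarith [gauge_le_one_of_mem hu]

end gaugeDist

theorem surrogate_one_step_general {d : ℕ} (C : Set (EuclideanSpace ℝ (Fin d))) (r : ℝ)
    (hr : 0 < r) (hclosed : IsClosed C) (hconv : Convex ℝ C)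
    (hlow : Metric.closedBall 0 r ⊆ C)
    (g w : EuclideanSpace ℝ (Fin d))
    (x : EuclideanSpace ℝ (Fin d))
    (hx : x = if 1 ≤ gauge C w then (gauge C w)⁻¹ • w else w)
    (ℓ : EuclideanSpace ℝ (Fin d) → ℝ)
    (hℓ : ∀ v, ℓ v = ⟪g, v⟫ - (if ⟪g, w⟫ < 0 then ⟪g, x⟫ else 0) * gaugeDist C v) :
    x ∈ C ∧ ∀ z ∈ C, ⟪g, x - z⟫ ≤ ℓ w - ℓ z := by
  have hnhds : C ∈ nhds 0 := Filter.mem_of_superset (Metric.closedBall_mem_nhds 0 hr) hlow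
  have habs : Absorbent ℝ C := absorbent_nhds_zero hnhds
  rw [ite_eq_gaugeScale_smul] at hx
  subst hx
  refine ⟨gaugeScale_smul_mem hconv hclosed habs, fun z hz => ?_⟩
  have hw_bound := mul_le_sub_ite_mul (a := ⟪g, w⟫) gaugeScale_le_one
    (one_le_gaugeScale_mul_one_add (gaugeDist_nonneg w) (gauge_sub_one_le_gaugeDist hconv habs w))
  rw [hℓ, hℓ, gaugeDist_eq_zero_of_mem hz, inner_sub_right, real_inner_smul_right]
  linarith

/-- One-step surrogate-loss inequality: let `C` be closed convex with
`B(r) ⊆ C ⊆ B(R)`, `0 < r ≤ R`. Fix `g` and `w ∈ B(R)`; set `x = w/γ_C(w)` if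
`γ_C(w) ≥ 1` and `x = w` otherwise, and define the surrogate loss
`ℓ̃(v) = ⟪g, v⟫ − 𝟙[⟪g,w⟫<0]·⟪g,x⟫·S_C(v)`. Then `x ∈ C` and for every `z ∈ C`,
`⟪g, x − z⟫ ≤ ℓ̃(w) − ℓ̃(z)`. -/
theorem surrogate_one_step {d : ℕ} (C : Set (EuclideanSpace ℝ (Fin d))) (r R : ℝ)
    (hr : 0 < r) (hrR : r ≤ R) (hclosed : IsClosed C) (hconv : Convex ℝ C)
    (hlow : Metric.closedBall 0 r ⊆ C) (hhigh : C ⊆ Metric.closedBall 0 R)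
    (g w : EuclideanSpace ℝ (Fin d)) (hw : w ∈ Metric.closedBall 0 R)
    (x : EuclideanSpace ℝ (Fin d))
    (hx : x = if 1 ≤ gauge C w then (gauge C w)⁻¹ • w else w)
    (ℓ : EuclideanSpace ℝ (Fin d) → ℝ)
    (hℓ : ∀ v, ℓ v = ⟪g, v⟫ - (if ⟪g, w⟫ < 0 then ⟪g, x⟫ else 0) * gaugeDist C v) :
    x ∈ C ∧ ∀ z ∈ C, ⟪g, x - z⟫ ≤ ℓ w - ℓ z :=
  surrogate_one_step_general C r hr hclosed hconv hlow g w x hx ℓ hℓ
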